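/- arXiv:1103.0062 — 3 statements merged into one kernel-verified Lean document; each statement's English description precedes it below -/
import Mathlib

section
/- The multiplicity e_i(A) of p^i as a p-adic elementary divisor of A is zero whenever t < i < 2t, whenever 3t < i < 4t, and whenever i > 4t. -/
open Matrix

/-- The set of `k`-dimensional subspaces of `V`. -/
abbrev LGr (F V : Type*) [Field F] [AddCommGroup V] [Module F V] (k : ℕ) :=
  {W : Submodule F V // Module.finrank F W = k}

/-!
Counting lines skew to one or to two given lines gives `A J = J A = q⁴ J` and
`A² = q³ I + (q - q²) A + (q⁴ - q³) J` for the all-ones matrix `J`. Hence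
`(A - q⁴)(A - q)(A + q²) = 0`, and `C = q⁴ A⁻¹` is a polynomial in `A` and `J` with
`(C - 1)(C - q³)(C + q²) = 0`.

If `X (X - e₁) X + e₂ X - e₃ = 0` and `P X Q = diag d` with `P`, `Q` invertible, the `j`-th
diagonal entry gives `e₂ d_j ≡ e₃ (mod d_j²)`; so if `v(e₂) = m < i` and `v(e₃) > m + i`, no `d_j`
has valuation `i`. For `A` (`m = 3t`, `v(e₃) = 7t`) this excludes `3t < i < 4t`. The Smith form
of `C` has diagonal `q⁴ / d_j`, and for `C` (`m = 2t`, `v(e₃) = 5t`) the same argument excludes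
`t < i < 2t`. Finally `d_j ∣ q⁴` excludes `i > 4t`.
-/

open Module Submodule

section SmithForm

variable {R n : Type*} [CommRing R] [Fintype n] [DecidableEq n]
  {P Q X : Matrix n n R} {d : n → R}

theorem not_associated_pow_of_mul_mul_add_eq_zero [IsDomain R] {π : R} (hπ0 : π ≠ 0)
    (hπ : ¬IsUnit π) (hP : IsUnit P.det) (hQ : IsUnit Q.det) (hPXQ : P * X * Q = diagonal d)
    {Y : Matrix n n R} {β γ : R} (hX : X * Y * X + β • X + γ • 1 = 0) {m i : ℕ}
    (hβ : Associated (π ^ m) β) (hγ : π ^ (m + i + 1) ∣ γ) (hmi : m < i) (j : n) :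
    ¬Associated (π ^ i) (d j) := by
  rintro ⟨u, hu⟩
  set Z := Q⁻¹ * Y * P⁻¹
  have hconj : P * (X * Y * X) * Q = diagonal d * Z * diagonal d := by
    rw [← hPXQ]
    calc P * (X * Y * X) * Q = P * X * (Q * Q⁻¹) * Y * (P⁻¹ * P) * X * Q := by
          rw [mul_nonsing_inv Q hQ, nonsing_inv_mul P hP]
          simp only [Matrix.mul_one, Matrix.mul_assoc]
      _ = P * X * Q * Z * (P * X * Q) := by simp only [Z, Matrix.mul_assoc]
  have hentry : d j * Z j j * d j + β * d j + γ * (P * Q) j j = 0 := by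
    have h := congrArg (fun M => (P * M * Q) j j) hX
    simp only [Matrix.mul_add, Matrix.add_mul, Matrix.mul_smul, Matrix.smul_mul,
      Matrix.mul_one, Matrix.mul_zero, Matrix.zero_mul, hconj, hPXQ] at h
    simpa [Matrix.mul_diagonal, Matrix.diagonal_mul] using h
  have hdvd : π ^ (m + i + 1) ∣ β * d j := by
    have hsq : π ^ (m + i + 1) ∣ d j * Z j j * d j := by
      rw [← hu]
      exact (pow_dvd_pow π (by omega : m + i + 1 ≤ i + i)).trans
        ⟨u * Z j j * u, by ring⟩
    have : β * d j = -(d j * Z j j * d j) - γ * (P * Q) j j := by linear_combination hentry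
    rw [this]
    exact dvd_sub (dvd_neg.mpr hsq) (hγ.mul_right _)
  have hassoc : Associated (π ^ (m + i)) (β * d j) := by
    rw [pow_add]
    exact hβ.mul_mul ⟨u, hu⟩
  have := (pow_dvd_pow_iff hπ0 hπ).1 (hassoc.dvd_iff_dvd_right.2 hdvd)
  omega

theorem exists_diagonal_of_mul_eq_smul_one [IsDomain R] (hP : IsUnit P.det) (hQ : IsUnit Q.det)
    (hPXQ : P * X * Q = diagonal d) {C : Matrix n n R} {c : R} (hc : c ≠ 0)
    (hXC : X * C = c • 1) : ∃ d' : n → R, Q⁻¹ * C * P⁻¹ = diagonal d' ∧ ∀ j, d j * d' j = c := by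
  set M := Q⁻¹ * C * P⁻¹
  have hDM : diagonal d * M = c • 1 := by
    rw [← hPXQ]
    calc P * X * Q * M = P * X * (Q * Q⁻¹) * C * P⁻¹ := by simp only [M, Matrix.mul_assoc]
      _ = c • 1 := by
        rw [mul_nonsing_inv Q hQ, Matrix.mul_one, Matrix.mul_assoc P X, hXC, Matrix.mul_smul,
          Matrix.mul_one, Matrix.smul_mul, mul_nonsing_inv P hP]
  have hentry : ∀ j k, d j * M j k = c * (1 : Matrix n n R) j k := fun j k => by
    simpa [Matrix.diagonal_mul] using congrFun₂ hDM j k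
  refine ⟨fun j => M j j, ?_, fun j => by simpa using hentry j j⟩
  ext j k
  by_cases hjk : j = k
  · subst hjk; simp
  · have hdj : d j ≠ 0 := fun h => hc (by simpa [h] using (hentry j j).symm)
    simpa [hjk, hdj] using hentry j k

theorem associated_pow_sub_of_mul_eq_pow [IsDomain R] {π a b : R} (hπ0 : π ≠ 0) {i k : ℕ}
    (hik : i ≤ k) (ha : Associated (π ^ i) a) (hab : a * b = π ^ k) :
    Associated (π ^ (k - i)) b := by
  obtain ⟨u, rfl⟩ := ha
  refine ⟨u⁻¹, ?_⟩
  have : π ^ i * (u * b) = π ^ i * π ^ (k - i) := by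
    rw [← pow_add, Nat.add_sub_cancel' hik, ← hab]; ring
  rw [← mul_left_cancel₀ (pow_ne_zero i hπ0) this]
  simp [mul_comm, mul_assoc]

end SmithForm

section Cubic

variable {R n : Type*} [CommRing R] [Fintype n] [DecidableEq n]

theorem mul_mul_add_smul_add_smul_eq_zero_of_roots {X : Matrix n n R} {a b c : R}
    (h : (X - a • 1) * (X - b • 1) * (X - c • 1) = 0) :
    X * (X - (a + b + c) • 1) * X + (a * b + b * c + c * a) • X + (-(a * b * c)) • 1 = 0 := by
  rw [← h]
  simp only [Matrix.sub_mul, Matrix.mul_sub, Matrix.smul_mul, Matrix.mul_smul, Matrix.one_mul,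
    Matrix.mul_one]
  module

theorem reciprocal_roots_eq_zero [IsDomain R] {A C : Matrix n n R} {c : R}
    (hAC : A * C = c • 1) (hCA : C * A = c • 1) {a b e a' b' e' : R}
    (ha : a * a' = c) (hb : b * b' = c) (he : e * e' = c) (h0 : a * b * e ≠ 0)
    (h : (A - a • 1) * (A - b • 1) * (A - e • 1) = 0) :
    (C - a' • 1) * (C - b' • 1) * (C - e' • 1) = 0 := by
  have key : ∀ {r r' : R}, r * r' = c → r • (C - r' • 1) = -(C * (A - r • 1)) := by
    intro r r' hr
    rw [Matrix.mul_sub, hCA, Matrix.mul_smul, Matrix.mul_one, ← hr, smul_sub, smul_smul]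
    abel
  have hcomm : ∀ r : R, Commute C (A - r • 1) := fun r =>
    (show Commute C A from hCA.trans hAC.symm).sub_right ((Commute.one_right C).smul_right r)
  have : (a * b * e) • ((C - a' • 1) * (C - b' • 1) * (C - e' • 1)) = 0 := by
    calc (a * b * e) • ((C - a' • 1) * (C - b' • 1) * (C - e' • 1))
        = (a • (C - a' • 1)) * (b • (C - b' • 1)) * (e • (C - e' • 1)) := by
          simp only [Matrix.smul_mul, Matrix.mul_smul, smul_smul]; ring_nf
      _ = -(C * C * C * ((A - a • 1) * (A - b • 1) * (A - e • 1))) := by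
          rw [key ha, key hb, key he]
          simp only [neg_mul, mul_neg, neg_neg, Matrix.mul_assoc, (hcomm a).left_comm,
            (hcomm b).left_comm]
      _ = 0 := by rw [h, Matrix.mul_zero, neg_zero]
  exact (smul_eq_zero.1 this).resolve_left h0

end Cubic

section SkewRelations

variable {R n : Type*} [CommRing R] [Fintype n] [DecidableEq n] {q : R} {A J : Matrix n n R}

/-- `q⁴ A⁻¹` for the skew-lines matrix `A`, as a polynomial in `A` and the all-ones matrix `J`. -/
def skewDual (q : R) (A J : Matrix n n R) : Matrix n n R :=
  q • A + (q ^ 3 - q ^ 2) • 1 - (q - 1) • J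

theorem mul_skewDual (hAA : A * A = q ^ 3 • 1 + (q - q ^ 2) • A + (q ^ 4 - q ^ 3) • J)
    (hAJ : A * J = q ^ 4 • J) : A * skewDual q A J = q ^ 4 • 1 := by
  rw [skewDual, Matrix.mul_sub, Matrix.mul_add, Matrix.mul_smul, Matrix.mul_smul,
    Matrix.mul_smul, Matrix.mul_one, hAA, hAJ]
  module

theorem skewDual_mul (hAA : A * A = q ^ 3 • 1 + (q - q ^ 2) • A + (q ^ 4 - q ^ 3) • J)
    (hJA : J * A = q ^ 4 • J) : skewDual q A J * A = q ^ 4 • 1 := by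
  rw [skewDual, Matrix.sub_mul, Matrix.add_mul, Matrix.smul_mul, Matrix.smul_mul,
    Matrix.smul_mul, Matrix.one_mul, hAA, hJA]
  module

theorem skew_cubic (hAA : A * A = q ^ 3 • 1 + (q - q ^ 2) • A + (q ^ 4 - q ^ 3) • J)
    (hAJ : A * J = q ^ 4 • J) : (A - q ^ 4 • 1) * (A - q • 1) * (A - (-q ^ 2) • 1) = 0 := by
  have hquad : (A - q • 1) * (A - (-q ^ 2) • 1) = (q ^ 4 - q ^ 3) • J := by
    simp only [Matrix.sub_mul, Matrix.mul_sub, Matrix.smul_mul, Matrix.mul_smul, Matrix.one_mul,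
      Matrix.mul_one, hAA]
    module
  rw [Matrix.mul_assoc, hquad, Matrix.mul_smul, Matrix.sub_mul, hAJ, Matrix.smul_mul,
    Matrix.one_mul, sub_self, smul_zero]

end SkewRelations

theorem isUnit_sub_one_of_dvd {R : Type*} [CommRing R] [IsLocalRing R] {π x : R}
    (hπ : ¬IsUnit π) (h : π ∣ x) : IsUnit (x - 1) := by
  have hx : x ∈ nonunits R := fun hx => hπ (isUnit_of_dvd_unit h hx)
  simpa [neg_sub] using (IsLocalRing.isUnit_one_sub_self_of_mem_nonunits x hx).neg

section ElementaryDivisors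

variable {R n : Type*} [CommRing R] [IsDomain R] [Fintype n] [DecidableEq n]
  {π q : R} {t : ℕ} {A J P Q : Matrix n n R} {d : n → R}

theorem not_associated_pow_of_four_mul_lt (hπ0 : π ≠ 0) (hπ : ¬IsUnit π) (hq : q = π ^ t)
    (hP : IsUnit P.det) (hQ : IsUnit Q.det) (hPAQ : P * A * Q = diagonal d)
    (hAA : A * A = q ^ 3 • 1 + (q - q ^ 2) • A + (q ^ 4 - q ^ 3) • J)
    (hAJ : A * J = q ^ 4 • J) {i : ℕ} (hi : 4 * t < i) (j : n) : ¬Associated (π ^ i) (d j) := by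
  intro hj
  have hq4 : q ^ 4 = π ^ (4 * t) := by rw [hq, ← pow_mul, mul_comm]
  obtain ⟨d', -, hdd'⟩ := exists_diagonal_of_mul_eq_smul_one hP hQ hPAQ
    (by rw [hq4]; exact pow_ne_zero _ hπ0) (mul_skewDual hAA hAJ)
  have := (pow_dvd_pow_iff hπ0 hπ).1 (hj.dvd.trans ⟨d' j, by rw [hdd', hq4]⟩)
  omega

theorem not_associated_pow_of_three_mul_lt [IsLocalRing R] (hπ0 : π ≠ 0) (hπ : ¬IsUnit π)
    (ht : 0 < t) (hq : q = π ^ t) (hP : IsUnit P.det) (hQ : IsUnit Q.det)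
    (hPAQ : P * A * Q = diagonal d)
    (hAA : A * A = q ^ 3 • 1 + (q - q ^ 2) • A + (q ^ 4 - q ^ 3) • J)
    (hAJ : A * J = q ^ 4 • J) {i : ℕ} (hi₁ : 3 * t < i) (hi₂ : i < 4 * t) (j : n) :
    ¬Associated (π ^ i) (d j) := by
  have hπq : π ∣ q := hq ▸ dvd_pow_self π ht.ne'
  have hβ : Associated (π ^ (3 * t)) (q ^ 4 * q + q * -q ^ 2 + -q ^ 2 * q ^ 4) := by
    rw [show q ^ 4 * q + q * -q ^ 2 + -q ^ 2 * q ^ 4 = q ^ 3 * ((q ^ 2 - q ^ 3) - 1) by ring,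
      mul_comm 3 t, pow_mul, ← hq]
    refine associated_mul_unit_right _ _ (isUnit_sub_one_of_dvd hπ ?_)
    exact dvd_sub (dvd_pow hπq two_ne_zero) (dvd_pow hπq three_ne_zero)
  refine not_associated_pow_of_mul_mul_add_eq_zero hπ0 hπ hP hQ hPAQ
    (mul_mul_add_smul_add_smul_eq_zero_of_roots (skew_cubic hAA hAJ)) hβ ?_ hi₁ j
  rw [show -(q ^ 4 * q * -q ^ 2) = q ^ 7 by ring, hq, ← pow_mul]
  exact pow_dvd_pow π (by omega)

theorem not_associated_pow_of_lt_two_mul [IsLocalRing R] (hπ0 : π ≠ 0) (hπ : ¬IsUnit π)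
    (ht : 0 < t) (hq : q = π ^ t) (hP : IsUnit P.det) (hQ : IsUnit Q.det)
    (hPAQ : P * A * Q = diagonal d)
    (hAA : A * A = q ^ 3 • 1 + (q - q ^ 2) • A + (q ^ 4 - q ^ 3) • J)
    (hAJ : A * J = q ^ 4 • J) (hJA : J * A = q ^ 4 • J) {i : ℕ} (hi₁ : t < i) (hi₂ : i < 2 * t)
    (j : n) : ¬Associated (π ^ i) (d j) := by
  intro hj
  have hπq : π ∣ q := hq ▸ dvd_pow_self π ht.ne'
  have hq0 : q ≠ 0 := hq ▸ pow_ne_zero t hπ0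
  have hq4 : q ^ 4 = π ^ (4 * t) := by rw [hq, ← pow_mul, mul_comm]
  obtain ⟨d', hC, hdd'⟩ := exists_diagonal_of_mul_eq_smul_one hP hQ hPAQ (pow_ne_zero 4 hq0)
    (mul_skewDual hAA hAJ)
  have hroots : (skewDual q A J - (1 : R) • 1) * (skewDual q A J - q ^ 3 • 1)
      * (skewDual q A J - (-q ^ 2) • 1) = 0 :=
    reciprocal_roots_eq_zero (mul_skewDual hAA hAJ) (skewDual_mul hAA hJA) (mul_one _)
      (by ring) (by ring) (by simp [hq0]) (skew_cubic hAA hAJ)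
  have hβ : Associated (π ^ (2 * t)) (1 * q ^ 3 + q ^ 3 * -q ^ 2 + -q ^ 2 * 1) := by
    rw [show 1 * q ^ 3 + q ^ 3 * -q ^ 2 + -q ^ 2 * 1 = q ^ 2 * ((q - q ^ 3) - 1) by ring,
      mul_comm 2 t, pow_mul, ← hq]
    refine associated_mul_unit_right _ _ (isUnit_sub_one_of_dvd hπ ?_)
    exact dvd_sub hπq (dvd_pow hπq three_ne_zero)
  refine not_associated_pow_of_mul_mul_add_eq_zero hπ0 hπ (isUnit_nonsing_inv_det Q hQ)
    (isUnit_nonsing_inv_det P hP) hC (mul_mul_add_smul_add_smul_eq_zero_of_roots hroots) hβ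
    (i := 4 * t - i) ?_ (by omega) j
    (associated_pow_sub_of_mul_eq_pow hπ0 (by omega) hj ((hdd' j).trans hq4))
  rw [show -(1 * q ^ 3 * -q ^ 2) = q ^ 5 by ring, hq, ← pow_mul]
  exact pow_dvd_pow π (by omega)

end ElementaryDivisors

section Complements

variable {R V : Type*} [Ring R] [AddCommGroup V] [Module R V] {U W₀ : Submodule R V}

noncomputable def linearMapEquivProj (hc : IsCompl U W₀) :
    (W₀ →ₗ[R] U) ≃ {f : V →ₗ[R] U // ∀ x : U, f x = x} where
  toFun g := ⟨LinearMap.ofIsCompl hc LinearMap.id g, fun x => by simp⟩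
  invFun f := f.1 ∘ₗ W₀.subtype
  left_inv g := by ext; simp
  right_inv f := Subtype.ext <| LinearMap.ofIsCompl_eq hc (fun x => (f.2 x).symm) fun _ => rfl

theorem LinearMap.injective_comp_subtype_iff_disjoint_ker {N : Type*} [AddCommGroup N]
    [Module R N] (f : V →ₗ[R] N) (W : Submodule R V) :
    Function.Injective (f ∘ₗ W.subtype) ↔ Disjoint (ker f) W := by
  rw [← LinearMap.ker_eq_bot, LinearMap.ker_comp, ← disjoint_iff_comap_eq_bot, disjoint_comm]

theorem Module.Basis.linearIndependent_comp_iff_injective {ι M N : Type*} [Fintype ι]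
    [AddCommGroup M] [Module R M] [AddCommGroup N] [Module R N] (b : Basis ι R M) (g : M →ₗ[R] N) :
    LinearIndependent R (g ∘ b) ↔ Function.Injective g := by
  have : ⇑(Fintype.linearCombination R (g ∘ b)) = g ∘ b.equivFun.symm := funext fun x => by
    simp [Fintype.linearCombination_apply, Basis.equivFun_symm_apply, map_sum]
  rw [linearIndependent_iff_injective_fintypeLinearCombination, this, EquivLike.injective_comp]

end Complements

section FiniteField

variable {F M N : Type*} [Field F] [AddCommGroup M] [Module F M] [AddCommGroup N] [Module F N]

theorem exists_basis_fin_two (hM : finrank F M = 2) {x y : M} (hx : x ≠ 0)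
    (hy : y ∉ span F {x}) : ∃ b : Basis (Fin 2) F M, b 0 = x ∧ b 1 = y := by
  have hli : LinearIndependent F ![x, y] :=
    (LinearIndependent.pair_iff' hx).2 fun a h => hy (mem_span_singleton.2 ⟨a, h⟩)
  let b := basisOfLinearIndependentOfCardEqFinrank hli (by simp [hM])
  exact ⟨b, by simp [b], by simp [b]⟩

theorem card_linearMap_apply (hM : finrank F M = 2) {m : M} (hm : m ≠ 0) (p : N → Prop) :
    Nat.card {g : M →ₗ[F] N // p (g m)} = Nat.card {y // p y} * Nat.card N := by
  have hspan : span F {m} ≠ ⊤ := fun h => by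
    have := finrank_span_singleton (K := F) hm
    rw [h, finrank_top, hM] at this
    omega
  obtain ⟨y, -, hy⟩ := SetLike.exists_of_lt (lt_top_iff_ne_top.2 hspan)
  obtain ⟨b, hb0, hb1⟩ := exists_basis_fin_two hM hm hy
  let E := (b.constr F).symm.toEquiv.trans (piFinTwoEquiv fun _ => N)
  have hE : ∀ g, E g = (g m, g y) := fun g => by simp [E, hb0, hb1]
  rw [Nat.card_congr (E.subtypeEquiv (q := fun x => p x.1) fun g => by rw [hE]),
    Nat.card_congr Equiv.prodSubtypeFstEquivSubtypeProd, Nat.card_prod]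

variable [Fintype F] [FiniteDimensional F N]

theorem card_injective_linearMap [FiniteDimensional F M] {k : ℕ} (hM : finrank F M = k)
    (hk : k ≤ finrank F N) : Nat.card {g : M →ₗ[F] N // Function.Injective g}
      = ∏ i : Fin k, (Fintype.card F ^ finrank F N - Fintype.card F ^ (i : ℕ)) := by
  have := Module.finite_of_finite F (M := N)
  let b := Module.finBasisOfFinrankEq F M hM
  rw [← card_linearIndependent hk]
  exact Nat.card_congr ((b.constr F).symm.toEquiv.subtypeEquiv fun g =>
    (b.linearIndependent_comp_iff_injective g).symm)

theorem card_notMem_span_singleton {x : N} (hx : x ≠ 0) :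
    Nat.card {y : N // y ∉ span F {x}} = Fintype.card F ^ finrank F N - Fintype.card F := by
  classical
  have := Module.finite_of_finite F (M := N)
  have : Fintype N := Fintype.ofFinite N
  rw [Nat.card_eq_fintype_card, Fintype.card_subtype_compl, card_eq_pow_finrank (K := F),
    ← Nat.card_eq_fintype_card (α := {y // y ∈ span F {x}}), natCard_eq_pow_finrank (K := F),
    finrank_span_singleton hx, pow_one, Nat.card_eq_fintype_card]

end FiniteField

section Lines

variable {F V : Type*} [Field F] [AddCommGroup V] [Module F V] [FiniteDimensional F V]
  {U : Submodule F V}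

def isComplEquivSkewLines (hV : finrank F V = 4) (hU : finrank F U = 2) :
    {W // IsCompl U W} ≃ {X : LGr F V 2 // Disjoint U X.1} where
  toFun W := ⟨⟨W.1, by have := finrank_add_eq_of_isCompl W.2; omega⟩, W.2.disjoint⟩
  invFun X := ⟨X.1.1, (isCompl_iff_disjoint _ _ (by rw [hV, hU, X.1.2])).2 X.2⟩

/-- Lines skew to `U` are the kernels of the projections onto `U`, and these are parametrised
by their restrictions to a fixed complement `W₀`. -/
noncomputable def skewLinesEquiv (hV : finrank F V = 4) (hU : finrank F U = 2)
    {W₀ : Submodule F V} (hc : IsCompl U W₀) : (W₀ →ₗ[F] U) ≃ {X : LGr F V 2 // Disjoint U X.1} :=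
  ((linearMapEquivProj hc).trans U.isComplEquivProj.symm).trans (isComplEquivSkewLines hV hU)

theorem skewLinesEquiv_apply_coe (hV : finrank F V = 4) (hU : finrank F U = 2)
    {W₀ : Submodule F V} (hc : IsCompl U W₀) (g : W₀ →ₗ[F] U) :
    (skewLinesEquiv hV hU hc g).1.1 = LinearMap.ker (LinearMap.ofIsCompl hc LinearMap.id g) := rfl

theorem card_skewLines_pair_eq (hV : finrank F V = 4) (hU : finrank F U = 2)
    {W₀ : Submodule F V} (hc : IsCompl U W₀) (W : Submodule F V) :
    Nat.card {X : LGr F V 2 // Disjoint U X.1 ∧ Disjoint X.1 W} = Nat.card {g : W₀ →ₗ[F] U //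
      Function.Injective (LinearMap.ofIsCompl hc LinearMap.id g ∘ₗ W.subtype)} := by
  rw [← Nat.card_congr (Equiv.subtypeSubtypeEquivSubtypeInter
    (fun X : LGr F V 2 => Disjoint U X.1) (fun X => Disjoint X.1 W))]
  exact (Nat.card_congr ((skewLinesEquiv hV hU hc).subtypeEquiv fun g => by
    rw [skewLinesEquiv_apply_coe]
    exact LinearMap.injective_comp_subtype_iff_disjoint_ker _ _)).symm

variable [Fintype F]

theorem card_skewLines (hV : finrank F V = 4) (hU : finrank F U = 2) :
    Nat.card {X : LGr F V 2 // Disjoint U X.1} = Fintype.card F ^ 4 := by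
  obtain ⟨W₀, hc⟩ := U.exists_isCompl
  have hW₀ : finrank F W₀ = 2 := by have := finrank_add_eq_of_isCompl hc; omega
  rw [← Nat.card_congr (skewLinesEquiv hV hU hc), natCard_eq_pow_finrank (K := F),
    finrank_linearMap, hW₀, hU, Nat.card_eq_fintype_card]

theorem card_skewLines_pair_of_disjoint (hV : finrank F V = 4) (hU : finrank F U = 2)
    {W : Submodule F V} (hW : finrank F W = 2) (hUW : Disjoint U W) :
    Nat.card {X : LGr F V 2 // Disjoint U X.1 ∧ Disjoint X.1 W}
      = (Fintype.card F ^ 2 - 1) * (Fintype.card F ^ 2 - Fintype.card F) := by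
  have hc : IsCompl U W := (isCompl_iff_disjoint _ _ (by rw [hV, hU, hW])).2 hUW
  have hg : ∀ g : W →ₗ[F] U, LinearMap.ofIsCompl hc LinearMap.id g ∘ₗ W.subtype = g := fun g => by
    ext; simp
  simp_rw [card_skewLines_pair_eq hV hU hc W, hg]
  rw [card_injective_linearMap hW (by rw [hU]), Fin.prod_univ_two, hU]
  simp

theorem card_skewLines_pair_of_not_disjoint (hV : finrank F V = 4) (hU : finrank F U = 2)
    {W : Submodule F V} (hW : finrank F W = 2) (hUW : U ≠ W) (hmeet : ¬Disjoint U W) :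
    Nat.card {X : LGr F V 2 // Disjoint U X.1 ∧ Disjoint X.1 W}
      = (Fintype.card F ^ 2 - Fintype.card F) * Fintype.card F ^ 2 := by
  obtain ⟨w₁, hw₁U, hw₁W, hw₁⟩ : ∃ w₁ ∈ U, w₁ ∈ W ∧ w₁ ≠ 0 := by
    simpa [Submodule.disjoint_def] using hmeet
  obtain ⟨w₂, hw₂W, hw₂U⟩ : ∃ w₂ ∈ W, w₂ ∉ U := SetLike.not_le_iff_exists.1 fun h =>
    hUW (eq_of_le_of_finrank_eq h (by rw [hU, hW])).symm
  obtain ⟨b, hb0, hb1⟩ := exists_basis_fin_two hW (x := ⟨w₁, hw₁W⟩) (y := ⟨w₂, hw₂W⟩)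
    (by simpa using hw₁) fun h => by
      obtain ⟨a, ha⟩ := mem_span_singleton.1 h
      have ha' : a • w₁ = w₂ := by simpa using congrArg Subtype.val ha
      exact hw₂U (ha' ▸ U.smul_mem a hw₁U)
  -- with `w₂ ∈ W₀`, the projection onto `U` extending `g : W₀ → U` fixes `w₁` and sends `w₂`
  -- to `g w₂`, so it is injective on `W = ⟨w₁, w₂⟩` iff `g w₂ ∉ ⟨w₁⟩`
  obtain ⟨W₀, hW₀, hc⟩ := (disjoint_span_singleton_of_notMem hw₂U).symm.exists_isCompl
  have hW₀2 : finrank F W₀ = 2 := by have := finrank_add_eq_of_isCompl hc; omega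
  let u₁ : U := ⟨w₁, hw₁U⟩
  let m : W₀ := ⟨w₂, hW₀ (mem_span_singleton_self w₂)⟩
  have hinj : ∀ g : W₀ →ₗ[F] U,
      Function.Injective (LinearMap.ofIsCompl hc.symm LinearMap.id g ∘ₗ W.subtype)
        ↔ g m ∉ span F {u₁} := fun g => by
    have hfb : ⇑(LinearMap.ofIsCompl hc.symm LinearMap.id g ∘ₗ W.subtype) ∘ ⇑b = ![u₁, g m] := by
      funext i
      fin_cases i
      · show LinearMap.ofIsCompl hc.symm LinearMap.id g (b 0 : V) = u₁
        rw [hb0]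
        exact LinearMap.ofIsCompl_apply_left hc.symm u₁
      · show LinearMap.ofIsCompl hc.symm LinearMap.id g (b 1 : V) = g m
        rw [hb1]
        exact LinearMap.ofIsCompl_apply_right hc.symm m
    rw [← b.linearIndependent_comp_iff_injective, hfb,
      LinearIndependent.pair_iff' (by simpa [u₁] using hw₁), mem_span_singleton, not_exists]
  have hm : m ≠ 0 := by simpa [m] using (ne_of_mem_of_not_mem U.zero_mem hw₂U).symm
  rw [card_skewLines_pair_eq hV hU hc.symm W, Nat.card_congr (Equiv.subtypeEquivRight hinj)]
  refine (card_linearMap_apply hW₀2 hm (· ∉ span F {u₁})).trans ?_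
  rw [card_notMem_span_singleton (by simpa [u₁] using hw₁), natCard_eq_pow_finrank (K := F), hU,
    Nat.card_eq_fintype_card]

end Lines

section SkewMatrix

variable {F V R : Type*} [Field F] [Fintype F] [AddCommGroup V] [Module F V]
  [FiniteDimensional F V] [DecidableEq (Submodule F V)] [Fintype (LGr F V 2)] [CommRing R]
  {A : Matrix (LGr F V 2) (LGr F V 2) R}

theorem skewMatrix_mul_ones (hV : finrank F V = 4)
    (hA : ∀ U W : LGr F V 2, A U W = if U.1 ⊓ W.1 = ⊥ then 1 else 0) :
    A * (of fun _ _ => 1 : Matrix (LGr F V 2) (LGr F V 2) R)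
      = (Fintype.card F : R) ^ 4 • of fun _ _ => 1 := by
  classical
  ext U W
  simp only [Matrix.mul_apply, Matrix.of_apply, mul_one, hA, ← disjoint_iff, Finset.sum_boole,
    Matrix.smul_apply, smul_eq_mul]
  rw [← Fintype.card_subtype, ← Nat.card_eq_fintype_card, card_skewLines hV U.2]
  push_cast
  ring

theorem ones_mul_skewMatrix (hV : finrank F V = 4)
    (hA : ∀ U W : LGr F V 2, A U W = if U.1 ⊓ W.1 = ⊥ then 1 else 0) :
    (of fun _ _ => 1 : Matrix (LGr F V 2) (LGr F V 2) R) * A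
      = (Fintype.card F : R) ^ 4 • of fun _ _ => 1 := by
  classical
  ext U W
  simp only [Matrix.mul_apply, Matrix.of_apply, one_mul, hA, ← disjoint_iff, Finset.sum_boole,
    Matrix.smul_apply, smul_eq_mul]
  simp_rw [disjoint_comm (b := W.1)]
  rw [← Fintype.card_subtype, ← Nat.card_eq_fintype_card, card_skewLines hV W.2]
  push_cast
  ring

theorem skewMatrix_mul_self (hV : finrank F V = 4)
    (hA : ∀ U W : LGr F V 2, A U W = if U.1 ⊓ W.1 = ⊥ then 1 else 0) :
    A * A = (Fintype.card F : R) ^ 3 • 1 + ((Fintype.card F : R) - (Fintype.card F : R) ^ 2) • A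
      + ((Fintype.card F : R) ^ 4 - (Fintype.card F : R) ^ 3) •
        (of fun _ _ => 1 : Matrix (LGr F V 2) (LGr F V 2) R) := by
  classical
  have hq1 : 1 ≤ Fintype.card F ^ 2 := Nat.one_le_pow _ _ Fintype.card_pos
  have hq2 : Fintype.card F ≤ Fintype.card F ^ 2 := Nat.le_self_pow two_ne_zero _
  ext U W
  simp only [Matrix.mul_apply, hA, ← disjoint_iff, ite_zero_mul_ite_zero, mul_one,
    Finset.sum_boole, Matrix.add_apply, Matrix.smul_apply, Matrix.one_apply, Matrix.of_apply,
    smul_eq_mul]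
  rw [← Fintype.card_subtype, ← Nat.card_eq_fintype_card]
  by_cases hUW : U = W
  · subst hUW
    have hU : ¬Disjoint U.1 U.1 := fun h => by
      have := U.2
      rw [disjoint_self.1 h, finrank_bot] at this
      omega
    rw [Nat.card_congr (Equiv.subtypeEquivRight fun X : LGr F V 2 =>
        and_iff_left_of_imp (Disjoint.symm (a := U.1) (b := X.1))),
      card_skewLines hV U.2, if_pos rfl, if_neg hU]
    push_cast
    ring
  · have hUW' : U.1 ≠ W.1 := fun h => hUW (Subtype.ext h)
    by_cases hd : Disjoint U.1 W.1
    · rw [card_skewLines_pair_of_disjoint hV U.2 W.2 hd, if_neg hUW, if_pos hd]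
      push_cast [Nat.cast_sub hq1, Nat.cast_sub hq2]
      ring
    · rw [card_skewLines_pair_of_not_disjoint hV U.2 W.2 hUW' hd, if_neg hUW, if_neg hd]
      push_cast [Nat.cast_sub hq2]
      ring

end SkewMatrix

/-- **Theorem A(2).** The multiplicity of `p^i` as a `p`-adic elementary divisor of the
skew-lines incidence matrix `A` of `PG(3,q)`, `q = p^t`, vanishes for `t < i < 2t`,
for `3t < i < 4t`, and for `i > 4t`. -/
theorem elemDiv_vanish (p t : ℕ) [Fact p.Prime] (ht : 1 ≤ t)
    (F : Type*) [Field F] [Fintype F] (hF : Fintype.card F = p ^ t)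
    (V : Type*) [AddCommGroup V] [Module F V] (hV : Module.finrank F V = 4)
    [DecidableEq (Submodule F V)] [Fintype (LGr F V 2)]
    (A : Matrix (LGr F V 2) (LGr F V 2) ℤ_[p])
    (hA : ∀ U W : LGr F V 2, A U W = if U.1 ⊓ W.1 = ⊥ then 1 else 0)
    (P Q : Matrix (LGr F V 2) (LGr F V 2) ℤ_[p]) (d : LGr F V 2 → ℤ_[p])
    (hP : IsUnit P.det) (hQ : IsUnit Q.det) (hPQ : P * A * Q = Matrix.diagonal d)
    (i : ℕ) (hi : (t < i ∧ i < 2 * t) ∨ (3 * t < i ∧ i < 4 * t) ∨ 4 * t < i) :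
    Nat.card {j : LGr F V 2 // Associated ((p : ℤ_[p]) ^ i) (d j)} = 0 := by
  have : FiniteDimensional F V := Module.finite_of_finrank_pos (by omega)
  have hπ := PadicInt.irreducible_p (p := p)
  have hq : ((Fintype.card F : ℕ) : ℤ_[p]) = (p : ℤ_[p]) ^ t := by rw [hF, Nat.cast_pow]
  have hAA := skewMatrix_mul_self hV hA
  have hAJ := skewMatrix_mul_ones hV hA
  refine Nat.card_eq_zero.2 (.inl (isEmpty_subtype _ |>.2 fun j => ?_))
  rcases hi with ⟨hi₁, hi₂⟩ | ⟨hi₁, hi₂⟩ | hi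
  · exact not_associated_pow_of_lt_two_mul hπ.ne_zero hπ.not_isUnit ht hq hP hQ hPQ hAA hAJ
      (ones_mul_skewMatrix hV hA) hi₁ hi₂ j
  · exact not_associated_pow_of_three_mul_lt hπ.ne_zero hπ.not_isUnit ht hq hP hQ hPQ hAA hAJ
      hi₁ hi₂ j
  · exact not_associated_pow_of_four_mul_lt hπ.ne_zero hπ.not_isUnit hq hP hQ hPQ hAA hAJ hi j
end

section
/- The multiplicity of p^{4t} = q^4 as a p-adic elementary divisor of A is exactly 1, i.e., e_{4t}(A) = 1. -/
/-!
Parametrising the complements of a plane `U` in `F_q⁴` by `Hom(C, U) ≅ F_q⁴` for a fixed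
complement `C`, one counts the planes skew to one or two given planes and finds
`A 𝟙 = q⁴ 𝟙` and `A² = q³ I + (q - q²) A + (q⁴ - q³) J`. Hence `q⁴ ∣ A x` forces
`x ≡ (∑ x) 𝟙 (mod q)`, and `q⁴ p ∣ A x` forces `x ≡ 0 (mod p)`.

In `P A Q = diag d` the columns satisfy `A (Q eⱼ) = dⱼ P⁻¹ eⱼ`. Two indices with `q⁴ ∣ dⱼ` would
give two columns of the invertible `Q` both proportional to `𝟙` modulo `q`, and `q⁴ p ∣ dⱼ` would
make a column vanish modulo `p`. Finally `Q⁻¹ 𝟙` has a unit entry `yⱼ`, and `dⱼ yⱼ = q⁴ (P 𝟙)ⱼ`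
gives `q⁴ ∣ dⱼ`.
-/

open Matrix

open Module LinearMap Submodule IsLocalRing

namespace Submodule

variable {R E : Type*} [Ring R] [AddCommGroup E] [Module R E] {U C : Submodule R E}

/-- For a fixed complement `C` of `U`, the complements of `U` are the kernels of the maps
`u + c ↦ u + g c` with `g : C →ₗ U`. -/
noncomputable def isComplEquivLinearMap (h : IsCompl U C) : {X // IsCompl U X} ≃ (C →ₗ[R] U) :=
  U.isComplEquivProj.trans
    { toFun f := (f : E →ₗ[R] U) ∘ₗ C.subtype
      invFun g := ⟨ofIsCompl h LinearMap.id g, ofIsCompl_apply_left h⟩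
      left_inv f := Subtype.ext <| ofIsCompl_eq' h (by ext; simp [f.2]) rfl
      right_inv g := by ext; simp }

theorem mem_isComplEquivLinearMap_symm (h : IsCompl U C) (g : C →ₗ[R] U) (v : E) :
    v ∈ ((isComplEquivLinearMap h).symm g : Submodule R E) ↔
      ofIsCompl h LinearMap.id g v = 0 :=
  Iff.rfl

theorem coe_mem_isComplEquivLinearMap_symm (h : IsCompl U C) (g : C →ₗ[R] U) (c : C) :
    (c : E) ∈ ((isComplEquivLinearMap h).symm g : Submodule R E) ↔ g c = 0 := by
  rw [mem_isComplEquivLinearMap_symm, ofIsCompl_apply_right]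

theorem isComplEquivLinearMap_symm_inf_eq_bot_iff (h : IsCompl U C) (g : C →ₗ[R] U) :
    ((isComplEquivLinearMap h).symm g : Submodule R E) ⊓ C = ⊥ ↔ Function.Injective g := by
  rw [← disjoint_iff, disjoint_def, injective_iff_map_eq_zero]
  refine ⟨fun hX c hc => Subtype.ext (hX c ((coe_mem_isComplEquivLinearMap_symm h g c).2 hc) c.2),
    fun hg v hvX hvC => ?_⟩
  have := hg ⟨v, hvC⟩ ((coe_mem_isComplEquivLinearMap_symm h g ⟨v, hvC⟩).1 hvX)
  exact congrArg Subtype.val this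

theorem isComplEquivLinearMap_symm_inf_eq_bot_iff_of_eq_sup {K V : Type*} [DivisionRing K]
    [AddCommGroup V] [Module K V] {U C W : Submodule K V} (h : IsCompl U C) (g : C →ₗ[K] U)
    {c : C} (hc : c ≠ 0) (hW : W = U ⊓ W ⊔ span K {(c : V)}) :
    ((isComplEquivLinearMap h).symm g : Submodule K V) ⊓ W = ⊥ ↔ (g c : V) ∉ W := by
  have hcW : (c : V) ∈ W := hW ▸ mem_sup_right (mem_span_singleton_self _)
  rw [← disjoint_iff, disjoint_def]
  constructor
  · intro hX hgc
    have hmem : (c : V) - g c ∈ ((isComplEquivLinearMap h).symm g : Submodule K V) := by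
      rw [mem_isComplEquivLinearMap_symm, map_sub, ofIsCompl_apply_left,
        ofIsCompl_apply_right, LinearMap.id_apply, sub_self]
    have hcU : (c : V) ∈ U := sub_eq_zero.1 (hX _ hmem (sub_mem hcW hgc)) ▸ (g c).2
    exact hc (Subtype.ext (disjoint_def.1 h.disjoint _ hcU c.2))
  · intro hgc v hvX hvW
    rw [hW] at hvW
    obtain ⟨z, hz, y, hy, rfl⟩ := mem_sup.1 hvW
    obtain ⟨a, rfl⟩ := mem_span_singleton.1 hy
    have hzU : z ∈ U := (mem_inf.1 hz).1
    have hsum : z + a • (g c : V) = 0 := by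
      have := (mem_isComplEquivLinearMap_symm h g _).1 hvX
      rw [map_add, map_smul, ofIsCompl_apply_left h (⟨z, hzU⟩ : U),
        ofIsCompl_apply_right] at this
      simpa using congrArg Subtype.val this
    by_cases ha : a = 0
    · simpa [ha] using hsum
    · refine absurd ?_ hgc
      rw [← inv_smul_smul₀ ha (g c : V), eq_neg_of_add_eq_zero_right hsum]
      exact smul_mem _ _ (neg_mem (mem_inf.1 hz).2)

end Submodule

theorem Module.Basis.injective_constr_iff {ι K M N : Type*} [CommRing K] [AddCommGroup M]
    [Module K M] [AddCommGroup N] [Module K N] (b : Basis ι K M) (s : ι → N) :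
    Function.Injective (b.constr K s) ↔ LinearIndependent K s := by
  refine ⟨fun hinj => ?_, b.injective_constr_of_linearIndependent⟩
  have := b.linearIndependent.map' _ (ker_eq_bot.2 hinj)
  rwa [show (b.constr K s) ∘ b = s from funext (b.constr_basis K s)] at this

section Counting

variable {F : Type*} [Field F]

theorem natCard_linearMap (M N : Type*) [AddCommGroup M] [Module F M] [Module.Finite F M]
    [AddCommGroup N] [Module F N] [Module.Finite F N] :
    Nat.card (M →ₗ[F] N) = Nat.card F ^ (finrank F M * finrank F N) := by
  rw [natCard_eq_pow_finrank (K := F), finrank_linearMap]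

/-- Splitting off the value at `c` through a functional `φ` with `φ c = 1`. -/
noncomputable def linearMapEquivProdOfApply {M N : Type*} [AddCommGroup M] [Module F M]
    [AddCommGroup N] [Module F N] {c : M} (hc : c ≠ 0) :
    (M →ₗ[F] N) ≃ N × {g : M →ₗ[F] N // g c = 0} :=
  let φ := (Module.Projective.exists_dual_eq_one F hc).choose
  have hφ : φ c = 1 := (Module.Projective.exists_dual_eq_one F hc).choose_spec
  { toFun g := (g c, ⟨g - φ.smulRight (g c), by simp [hφ]⟩)
    invFun x := x.2.1 + φ.smulRight x.1
    left_inv g := by simp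
    right_inv x := by ext <;> simp [hφ, x.2.2] }

theorem natCard_apply_mem_mul {M N : Type*} [AddCommGroup M] [Module F M]
    [AddCommGroup N] [Module F N] {c : M} (hc : c ≠ 0) (T : Set N) :
    Nat.card {g : M →ₗ[F] N // g c ∈ T} * Nat.card N = Nat.card T * Nat.card (M →ₗ[F] N) := by
  let e := linearMapEquivProdOfApply (F := F) (N := N) hc
  rw [Nat.card_congr ((e.subtypeEquiv (p := fun g => g c ∈ T) (q := fun x => x.1 ∈ T)
      fun _ => Iff.rfl).trans Equiv.prodSubtypeFstEquivSubtypeProd),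
    Nat.card_congr e, Nat.card_prod, Nat.card_prod]
  ring

theorem natCard_injective_linearMap [Finite F] {M N : Type*} [AddCommGroup M] [Module F M]
    [Module.Finite F M] [AddCommGroup N] [Module F N] [Module.Finite F N]
    (h : finrank F M ≤ finrank F N) :
    Nat.card {g : M →ₗ[F] N // Function.Injective g} =
      ∏ i : Fin (finrank F M), (Nat.card F ^ finrank F N - Nat.card F ^ (i : ℕ)) := by
  have := Fintype.ofFinite F
  have : Finite N := Module.finite_of_finite F
  let b := Module.finBasis F M
  rw [← Nat.card_congr ((b.constr F).toEquiv.subtypeEquiv fun s => (b.injective_constr_iff s).symm),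
    card_linearIndependent h, Nat.card_eq_fintype_card]

variable {V : Type*} [AddCommGroup V] [Module F V] [FiniteDimensional F V]

namespace Submodule

theorem natCard_isCompl (U : Submodule F V) :
    Nat.card {X // IsCompl U X} = Nat.card F ^ ((finrank F V - finrank F U) * finrank F U) := by
  obtain ⟨C, hC⟩ := U.exists_isCompl
  rw [Nat.card_congr (isComplEquivLinearMap hC), natCard_linearMap,
    ← finrank_add_eq_of_isCompl hC, Nat.add_sub_cancel_left]

theorem natCard_isCompl_inf_eq_bot_of_isCompl [Finite F] {U W : Submodule F V} (hUW : IsCompl U W)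
    (h : finrank F W ≤ finrank F U) :
    Nat.card {X // IsCompl U X ∧ X ⊓ W = ⊥} =
      ∏ i : Fin (finrank F W), (Nat.card F ^ finrank F U - Nat.card F ^ (i : ℕ)) := by
  rw [← natCard_injective_linearMap h]
  exact Nat.card_congr <| (Equiv.subtypeSubtypeEquivSubtypeInter _ _).symm.trans <|
    (isComplEquivLinearMap hUW).subtypeEquiv fun X => by
      rw [← isComplEquivLinearMap_symm_inf_eq_bot_iff hUW, Equiv.symm_apply_apply]

theorem natCard_notMem_add_natCard_inf [Finite F] (U W : Submodule F V) :
    Nat.card {u : U // (u : V) ∉ W} + Nat.card (U ⊓ W : Submodule F V) = Nat.card U := by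
  classical
  have : Finite U := Module.finite_of_finite F
  have hZ : Nat.card {u : U // (u : V) ∈ W} = Nat.card (U ⊓ W : Submodule F V) :=
    Nat.card_congr ((equivMapOfInjective _ U.injective_subtype (W.comap U.subtype)).trans
      (LinearEquiv.ofEq _ _ (map_comap_subtype U W))).toEquiv
  rw [← hZ, add_comm, ← Nat.card_sum]
  exact Nat.card_congr (Equiv.sumCompl _)

theorem exists_eq_inf_sup_span_singleton {U W : Submodule F V}
    (h : finrank F (U ⊓ W : Submodule F V) + 1 = finrank F W) :
    ∃ w ∈ W, w ∉ U ∧ W = U ⊓ W ⊔ span F {w} := by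
  obtain ⟨w, hwW, hwU⟩ : ∃ w ∈ W, w ∉ U := SetLike.not_le_iff_exists.1 fun hWU => by
    rw [inf_eq_right.2 hWU] at h
    omega
  have hw0 : w ≠ 0 := fun h0 => hwU (h0 ▸ U.zero_mem)
  refine ⟨w, hwW, hwU, (eq_of_le_of_finrank_eq
    (sup_le inf_le_right ((span_singleton_le_iff_mem _ _).2 hwW)) ?_).symm⟩
  have hdisj : U ⊓ W ⊓ span F {w} = ⊥ :=
    ((disjoint_span_singleton' hw0).2 fun hw => hwU (mem_inf.1 hw).1).eq_bot
  have := finrank_sup_add_finrank_inf_eq (U ⊓ W) (span F {w})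
  rw [hdisj, finrank_bot, finrank_span_singleton hw0] at this
  omega

theorem natCard_isCompl_inf_eq_bot_of_finrank_inf_add_one [Finite F] {U W : Submodule F V}
    (h : finrank F (U ⊓ W : Submodule F V) + 1 = finrank F W) :
    Nat.card {X // IsCompl U X ∧ X ⊓ W = ⊥} * Nat.card F ^ finrank F U +
        Nat.card F ^ finrank F (U ⊓ W : Submodule F V) *
          Nat.card F ^ ((finrank F V - finrank F U) * finrank F U) =
      Nat.card F ^ finrank F U * Nat.card F ^ ((finrank F V - finrank F U) * finrank F U) := by
  obtain ⟨w, hwW, hwU, hW⟩ := exists_eq_inf_sup_span_singleton h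
  have hw0 : w ≠ 0 := fun h0 => hwU (h0 ▸ U.zero_mem)
  obtain ⟨C, hwC, hCU⟩ := ((disjoint_span_singleton' hw0).2 hwU).symm.exists_isCompl
  let c : C := ⟨w, hwC (mem_span_singleton_self w)⟩
  have hc : c ≠ 0 := fun h0 => hw0 (congrArg Subtype.val h0)
  have hcount : Nat.card {X // IsCompl U X ∧ X ⊓ W = ⊥} =
      Nat.card {g : C →ₗ[F] U // g c ∈ {u : U | (u : V) ∉ W}} :=
    Nat.card_congr <| (Equiv.subtypeSubtypeEquivSubtypeInter _ _).symm.trans <|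
      (isComplEquivLinearMap hCU.symm).subtypeEquiv fun X => by
        rw [Set.mem_ofPred_eq,
          ← isComplEquivLinearMap_symm_inf_eq_bot_iff_of_eq_sup hCU.symm _ hc hW,
          Equiv.symm_apply_apply]
  have hCrank : finrank F C = finrank F V - finrank F U := by
    rw [← finrank_add_eq_of_isCompl hCU.symm, Nat.add_sub_cancel_left]
  rw [hcount, ← natCard_eq_pow_finrank, ← natCard_eq_pow_finrank, ← hCrank,
    ← natCard_linearMap, natCard_apply_mem_mul hc, ← add_mul]
  exact congrArg (· * _) (natCard_notMem_add_natCard_inf U W)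

end Submodule

end Counting

section Divisibility

variable {R n : Type*} [CommRing R] [Fintype n]

theorem Matrix.dvd_mulVec_apply (M : Matrix n n R) {m : R} {x : n → R} (hx : ∀ j, m ∣ x j)
    (i : n) : m ∣ (M *ᵥ x) i :=
  Finset.dvd_sum fun j _ => (hx j).mul_left _

variable [DecidableEq n]

theorem Matrix.dvd_of_dvd_mulVec {Q : Matrix n n R} (hQ : IsUnit Q.det) {m : R} {y : n → R}
    (h : ∀ i, m ∣ (Q *ᵥ y) i) (j : n) : m ∣ y j := by
  have := Q⁻¹.dvd_mulVec_apply h j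
  rwa [mulVec_mulVec, nonsing_inv_mul Q hQ, one_mulVec] at this

theorem Matrix.not_forall_dvd_col {Q : Matrix n n R} (hQ : IsUnit Q.det) {m : R}
    (hm : ¬IsUnit m) (j : n) : ¬∀ i, m ∣ Q.col j i := fun h => by
  rw [← mulVec_single_one] at h
  exact hm (isUnit_of_dvd_one (by simpa using dvd_of_dvd_mulVec hQ h j))

variable {A P Q : Matrix n n R} {d : n → R}

theorem Matrix.mulVec_col_of_mul_mul_eq_diagonal (hP : IsUnit P.det)
    (hPQ : P * A * Q = diagonal d) (j : n) : A *ᵥ Q.col j = d j • P⁻¹.col j := by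
  have hAQ : A * Q = P⁻¹ * diagonal d := by
    rw [← hPQ, Matrix.mul_assoc, ← Matrix.mul_assoc P⁻¹, nonsing_inv_mul P hP, Matrix.one_mul]
  ext i
  rw [← mulVec_single_one, mulVec_mulVec, hAQ, mulVec_single_one]
  simp [mul_comm]

theorem Matrix.dvd_mulVec_col_of_dvd (hP : IsUnit P.det) (hPQ : P * A * Q = diagonal d)
    {m : R} {j : n} (h : m ∣ d j) (i : n) : m ∣ (A *ᵥ Q.col j) i := by
  rw [mulVec_col_of_mul_mul_eq_diagonal hP hPQ]
  exact h.mul_right _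

theorem Matrix.exists_dvd_diagonal_of_mulVec_const [IsLocalRing R] [Nonempty n]
    (hQ : IsUnit Q.det) (hPQ : P * A * Q = diagonal d) {c : R}
    (hA : A *ᵥ (fun _ => 1) = fun _ => c) : ∃ j, c ∣ d j := by
  set y := Q⁻¹ *ᵥ fun _ => (1 : R)
  have hQy : Q *ᵥ y = fun _ => 1 := by
    rw [mulVec_mulVec, mul_nonsing_inv Q hQ, one_mulVec]
  obtain ⟨j, hj⟩ : ∃ j, IsUnit (y j) := by
    by_contra! h
    obtain ⟨i⟩ := ‹Nonempty n›
    have : (Q *ᵥ y) i ∈ maximalIdeal R :=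
      Ideal.sum_mem _ fun j _ => Ideal.mul_mem_left _ _ ((mem_maximalIdeal _).2 (h j))
    rw [hQy] at this
    exact (maximalIdeal.isMaximal R).ne_top ((Ideal.eq_top_iff_one _).2 this)
  have hdy : diagonal d *ᵥ y = P *ᵥ fun _ => c := by
    rw [← hPQ, ← mulVec_mulVec, ← mulVec_mulVec, hQy, hA]
  have := P.dvd_mulVec_apply (fun _ => dvd_refl c) j
  rw [← hdy, mulVec_diagonal] at this
  exact ⟨j, hj.dvd_mul_right.1 this⟩

/-- Columns of `Q` that are proportional to `v` modulo `m` are linearly dependent modulo `m`,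
which the invertibility of `Q` forbids. -/
theorem Matrix.subsingleton_dvd_diagonal (hP : IsUnit P.det) (hQ : IsUnit Q.det)
    (hPQ : P * A * Q = diagonal d) {c m : R} (hm : ¬IsUnit m) (v : n → R)
    (hA : ∀ x, (∀ i, c ∣ (A *ᵥ x) i) → ∃ s, ∀ i, m ∣ x i - s * v i) :
    {j | c ∣ d j}.Subsingleton := by
  intro j₁ h₁ j₂ h₂
  by_contra hne
  obtain ⟨s₁, hs₁⟩ := hA _ (dvd_mulVec_col_of_dvd hP hPQ h₁)
  obtain ⟨s₂, hs₂⟩ := hA _ (dvd_mulVec_col_of_dvd hP hPQ h₂)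
  have hy : ∀ i, m ∣ (Q *ᵥ (s₂ • Pi.single j₁ 1 - s₁ • Pi.single j₂ 1)) i := fun i => by
    have key : s₂ * Q i j₁ - s₁ * Q i j₂ =
        s₂ * (Q i j₁ - s₁ * v i) - s₁ * (Q i j₂ - s₂ * v i) := by ring
    simp only [mulVec_sub, mulVec_smul, mulVec_single_one, Pi.sub_apply, Pi.smul_apply, col_apply,
      smul_eq_mul, key]
    exact dvd_sub ((hs₁ i).mul_left _) ((hs₂ i).mul_left _)
  have hs₁m : m ∣ s₁ := by
    simpa [Pi.single_apply, hne] using dvd_of_dvd_mulVec hQ hy j₂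
  exact not_forall_dvd_col hQ hm j₁ fun i => (dvd_sub_left (hs₁m.mul_right _)).1 (hs₁ i)

theorem Matrix.not_dvd_diagonal (hP : IsUnit P.det) (hQ : IsUnit Q.det)
    (hPQ : P * A * Q = diagonal d) {c m : R} (hm : ¬IsUnit m)
    (hA : ∀ x, (∀ i, c ∣ (A *ᵥ x) i) → ∀ i, m ∣ x i) (j : n) : ¬c ∣ d j := fun h =>
  not_forall_dvd_col hQ hm j (hA _ (dvd_mulVec_col_of_dvd hP hPQ h))

theorem Matrix.dvd_add_of_dvd_mulVec {M : Matrix n n R} {a b c : R}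
    (hM : M * M = a • 1 + b • M + c • of fun _ _ => 1) {m : R} {x : n → R}
    (hx : ∀ i, m ∣ (M *ᵥ x) i) (i : n) : m ∣ a * x i + c * ∑ j, x j := by
  have h := M.dvd_mulVec_apply hx i
  rw [mulVec_mulVec, hM] at h
  have : ((a • 1 + b • M + c • of fun _ _ => (1 : R)) *ᵥ x) i =
      a * x i + c * ∑ j, x j + b * (M *ᵥ x) i := by
    simp only [add_mulVec, smul_mulVec, one_mulVec, Pi.add_apply, Pi.smul_apply, smul_eq_mul]
    simp only [mulVec, dotProduct, Finset.mul_sum, of_apply, one_mul]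
    ring
  rwa [this, dvd_add_left ((hx i).mul_left b)] at h

end Divisibility

theorem IsLocalRing.associated_of_dvd_of_not_dvd_mul {R : Type*} [CommRing R] [IsLocalRing R]
    {π c d : R} (hπ : maximalIdeal R = Ideal.span {π}) (h₁ : c ∣ d) (h₂ : ¬c * π ∣ d) :
    Associated c d := by
  obtain ⟨u, rfl⟩ := h₁
  refine associated_mul_unit_right c u (notMem_maximalIdeal.1 fun hu => h₂ ?_)
  rw [hπ, Ideal.mem_span_singleton] at hu
  exact mul_dvd_mul_left c hu

theorem Fintype.sum_boole_eq_natCard {α R : Type*} [Fintype α] [AddCommMonoidWithOne R]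
    (p : α → Prop) [DecidablePred p] :
    ∑ a, (if p a then (1 : R) else 0) = Nat.card {a // p a} := by
  rw [Finset.sum_boole, Nat.card_eq_fintype_card, Fintype.card_subtype]

section SkewLines

variable {F V : Type*} [Field F] [AddCommGroup V] [Module F V]

noncomputable def skewEquivIsCompl [FiniteDimensional F V] {k : ℕ} {U : Submodule F V}
    (hU : finrank F U + k = finrank F V) (P : Submodule F V → Prop) :
    {X : LGr F V k // U ⊓ X.1 = ⊥ ∧ P X.1} ≃ {X // IsCompl U X ∧ P X} where
  toFun X := ⟨X.1.1,
    (Submodule.isCompl_iff_disjoint _ _ (by rw [X.1.2, hU])).2 (disjoint_iff.2 X.2.1), X.2.2⟩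
  invFun X := ⟨⟨X.1, by have := finrank_add_eq_of_isCompl X.2.1; omega⟩,
    X.2.1.inf_eq_bot, X.2.2⟩

theorem LGr.nonempty [FiniteDimensional F V] {k : ℕ} (hk : k ≤ finrank F V) :
    Nonempty (LGr F V k) :=
  let b := Module.finBasis F V
  ⟨span F (Set.range (b ∘ Fin.castLE hk)), by
    rw [finrank_span_eq_card (b.linearIndependent.comp _ (Fin.castLE_injective hk)),
      Fintype.card_fin]⟩

theorem finrank_inf_eq_one_of_ne {U W : LGr F V 2} (hne : U ≠ W) (hUW : U.1 ⊓ W.1 ≠ ⊥) :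
    finrank F (U.1 ⊓ W.1 : Submodule F V) = 1 := by
  have := finite_of_finrank_eq_succ U.2
  have := finite_of_finrank_eq_succ W.2
  have hle : finrank F (U.1 ⊓ W.1 : Submodule F V) ≤ 2 := (finrank_mono inf_le_left).trans_eq U.2
  have h0 : finrank F (U.1 ⊓ W.1 : Submodule F V) ≠ 0 := fun h => hUW (finrank_eq_zero.1 h)
  have h2 : finrank F (U.1 ⊓ W.1 : Submodule F V) ≠ 2 := fun h => hne <| Subtype.ext <|
    (eq_of_le_of_finrank_eq inf_le_left (h.trans U.2.symm)).symm.trans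
      (eq_of_le_of_finrank_eq inf_le_right (h.trans W.2.symm))
  omega

variable (R : Type*) [CommRing R] (F V) [DecidableEq (Submodule F V)]

def skewMatrix : Matrix (LGr F V 2) (LGr F V 2) R :=
  of fun U W => if U.1 ⊓ W.1 = ⊥ then 1 else 0

variable [Fintype (LGr F V 2)] {F V}

theorem sum_skewMatrix (hV : finrank F V = 4) (U : LGr F V 2) :
    ∑ W, skewMatrix F V R U W = (Nat.card F : R) ^ 4 := by
  have := finite_of_finrank_eq_succ hV
  simp only [skewMatrix, of_apply, Fintype.sum_boole_eq_natCard]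
  have e := Nat.card_congr (skewEquivIsCompl (k := 2) (by rw [U.2, hV]) fun _ => True)
  simp only [and_true] at e
  rw [e, natCard_isCompl, U.2, hV]
  push_cast
  ring

theorem skewMatrix_mulVec_one (hV : finrank F V = 4) :
    skewMatrix F V R *ᵥ (fun _ => 1) = fun _ => (Nat.card F : R) ^ 4 := by
  ext U
  simp only [mulVec, dotProduct, mul_one, sum_skewMatrix R hV]

theorem sum_skewMatrix_mulVec (hV : finrank F V = 4) (x : LGr F V 2 → R) :
    ∑ U, (skewMatrix F V R *ᵥ x) U = (Nat.card F : R) ^ 4 * ∑ W, x W := by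
  simp only [mulVec, dotProduct]
  rw [Finset.sum_comm, Finset.mul_sum]
  refine Finset.sum_congr rfl fun W _ => ?_
  rw [← Finset.sum_mul, ← sum_skewMatrix R hV W]
  simp only [skewMatrix, of_apply, inf_comm]

theorem skewMatrix_mul_self_apply (hV : finrank F V = 4) (U W : LGr F V 2) :
    (skewMatrix F V R * skewMatrix F V R) U W = Nat.card {X // IsCompl U.1 X ∧ X ⊓ W.1 = ⊥} := by
  have := finite_of_finrank_eq_succ hV
  simp only [mul_apply, skewMatrix, of_apply, ite_zero_mul_ite_zero, mul_one,
    Fintype.sum_boole_eq_natCard]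
  exact congrArg Nat.cast (Nat.card_congr (skewEquivIsCompl (by rw [U.2, hV]) (· ⊓ W.1 = ⊥)))

theorem skewMatrix_mul_self_s4 [Finite F] (hV : finrank F V = 4) :
    skewMatrix F V R * skewMatrix F V R =
      (Nat.card F : R) ^ 3 • 1 + ((Nat.card F : R) - (Nat.card F : R) ^ 2) • skewMatrix F V R +
        ((Nat.card F : R) ^ 4 - (Nat.card F : R) ^ 3) • of fun _ _ => 1 := by
  have := finite_of_finrank_eq_succ hV
  have hq : 0 < Nat.card F := Nat.card_pos
  ext U W
  rw [skewMatrix_mul_self_apply R hV]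
  simp only [Matrix.add_apply, Matrix.smul_apply, Matrix.one_apply, skewMatrix, of_apply,
    smul_eq_mul]
  rcases eq_or_ne U W with rfl | hne
  · have hU0 : U.1 ⊓ U.1 ≠ ⊥ := fun h => by
      have := U.2
      rw [← inf_idem U.1, h, finrank_bot] at this
      omega
    rw [Nat.card_congr (Equiv.subtypeEquivRight fun X => and_iff_left_of_imp fun h =>
      h.symm.inf_eq_bot), natCard_isCompl, U.2, hV, if_pos rfl, if_neg hU0]
    push_cast
    ring
  by_cases hUW : U.1 ⊓ W.1 = ⊥
  · have hC : IsCompl U.1 W.1 :=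
      (Submodule.isCompl_iff_disjoint _ _ (by rw [U.2, W.2, hV])).2 (disjoint_iff.2 hUW)
    rw [natCard_isCompl_inf_eq_bot_of_isCompl hC (by rw [U.2, W.2]), U.2, W.2, if_neg hne,
      if_pos hUW, Nat.cast_prod, Fin.prod_univ_two]
    simp only [Fin.val_zero, Fin.val_one, pow_zero, pow_one]
    rw [Nat.cast_sub (Nat.one_le_pow _ _ hq), Nat.cast_sub (Nat.le_self_pow two_ne_zero _)]
    push_cast
    ring
  · have h := natCard_isCompl_inf_eq_bot_of_finrank_inf_add_one (F := F) (U := U.1) (W := W.1)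
      (by rw [finrank_inf_eq_one_of_ne hne hUW, W.2])
    rw [finrank_inf_eq_one_of_ne hne hUW, U.2, hV] at h
    have h' : Nat.card {X // IsCompl U.1 X ∧ X ⊓ W.1 = ⊥} + Nat.card F ^ 3 = Nat.card F ^ 4 :=
      Nat.eq_of_mul_eq_mul_right (pow_pos hq 2) (by linear_combination h)
    have h'' : (Nat.card {X // IsCompl U.1 X ∧ X ⊓ W.1 = ⊥} : R) =
        (Nat.card F : R) ^ 4 - (Nat.card F : R) ^ 3 :=
      eq_sub_of_add_eq (by simpa using congrArg (Nat.cast (R := R)) h')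
    rw [if_neg hne, if_neg hUW, h'']
    ring

variable {R} [IsDomain R] [Finite F]

theorem dvd_sub_sum_of_pow_four_dvd_skewMatrix_mulVec (hV : finrank F V = 4)
    (hq : (Nat.card F : R) ≠ 0) {x : LGr F V 2 → R}
    (hx : ∀ U, (Nat.card F : R) ^ 4 ∣ (skewMatrix F V R *ᵥ x) U) (U : LGr F V 2) :
    (Nat.card F : R) ∣ x U - ∑ W, x W := by
  have h := dvd_add_of_dvd_mulVec (skewMatrix_mul_self_s4 R hV) hx U
  set q := (Nat.card F : R)
  rw [show q ^ 3 * x U + (q ^ 4 - q ^ 3) * ∑ W, x W = q ^ 3 * (q * ∑ W, x W + (x U - ∑ W, x W))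
      by ring, pow_succ, mul_dvd_mul_iff_left (pow_ne_zero 3 hq)] at h
  exact (dvd_add_right (dvd_mul_right _ _)).1 h

theorem dvd_of_pow_four_mul_dvd_skewMatrix_mulVec (hV : finrank F V = 4)
    (hq : (Nat.card F : R) ≠ 0) {π : R} {x : LGr F V 2 → R}
    (hx : ∀ U, (Nat.card F : R) ^ 4 * π ∣ (skewMatrix F V R *ᵥ x) U) (U : LGr F V 2) :
    π ∣ x U := by
  have hsum := Finset.dvd_sum (s := Finset.univ) fun U _ => hx U
  rw [sum_skewMatrix_mulVec R hV, mul_dvd_mul_iff_left (pow_ne_zero 4 hq)] at hsum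
  have h := dvd_add_of_dvd_mulVec (skewMatrix_mul_self_s4 R hV) hx U
  set q := (Nat.card F : R)
  rw [show q ^ 4 * π = q ^ 3 * (q * π) by ring,
    show q ^ 3 * x U + (q ^ 4 - q ^ 3) * ∑ W, x W = q ^ 3 * (x U + (q - 1) * ∑ W, x W) by ring,
    mul_dvd_mul_iff_left (pow_ne_zero 3 hq)] at h
  exact (dvd_add_left (hsum.mul_left _)).1 ((dvd_mul_left π q).trans h)

end SkewLines

/-- **Theorem A(5).** The multiplicity of `p^{4t} = q^4` as a `p`-adic elementary divisor of
the skew-lines incidence matrix `A` of `PG(3,q)`, `q = p^t`, is exactly `1`. -/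
theorem elemDiv_top (p t : ℕ) [Fact p.Prime] (ht : 1 ≤ t)
    (F : Type*) [Field F] [Fintype F] (hF : Fintype.card F = p ^ t)
    (V : Type*) [AddCommGroup V] [Module F V] (hV : Module.finrank F V = 4)
    [DecidableEq (Submodule F V)] [Fintype (LGr F V 2)]
    (A : Matrix (LGr F V 2) (LGr F V 2) ℤ_[p])
    (hA : ∀ U W : LGr F V 2, A U W = if U.1 ⊓ W.1 = ⊥ then 1 else 0)
    (P Q : Matrix (LGr F V 2) (LGr F V 2) ℤ_[p]) (d : LGr F V 2 → ℤ_[p])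
    (hP : IsUnit P.det) (hQ : IsUnit Q.det) (hPQ : P * A * Q = Matrix.diagonal d)
    :
    Nat.card {j : LGr F V 2 // Associated ((p : ℤ_[p]) ^ (4 * t)) (d j)} = 1 := by
  have := finite_of_finrank_eq_succ hV
  have := LGr.nonempty (F := F) (V := V) (k := 2) (by omega)
  obtain rfl : A = skewMatrix F V ℤ_[p] := Matrix.ext hA
  have hq : (Nat.card F : ℤ_[p]) = (p : ℤ_[p]) ^ t := by
    rw [Nat.card_eq_fintype_card, hF, Nat.cast_pow]
  have hq0 : (Nat.card F : ℤ_[p]) ≠ 0 := Nat.cast_ne_zero.2 Nat.card_pos.ne'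
  have hqu : ¬IsUnit (Nat.card F : ℤ_[p]) := by
    rw [hq, isUnit_pow_iff (by omega)]
    exact PadicInt.prime_p.not_isUnit
  obtain ⟨j₀, hj₀⟩ := exists_dvd_diagonal_of_mulVec_const hQ hPQ (skewMatrix_mulVec_one _ hV)
  have huniq := subsingleton_dvd_diagonal hP hQ hPQ hqu 1 fun x hx =>
    ⟨∑ W, x W, by simpa using dvd_sub_sum_of_pow_four_dvd_skewMatrix_mulVec hV hq0 hx⟩
  have hexact := not_dvd_diagonal hP hQ hPQ PadicInt.prime_p.not_isUnit
    (fun _ => dvd_of_pow_four_mul_dvd_skewMatrix_mulVec hV hq0) j₀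
  rw [pow_mul', ← hq, Nat.card_eq_one_iff_exists]
  exact ⟨⟨j₀, associated_of_dvd_of_not_dvd_mul PadicInt.maximalIdeal_eq_span_p hj₀ hexact⟩,
    fun j => Subtype.ext (huniq j.2.dvd hj₀)⟩
end

section
/- Let B be the incidence matrix of points versus lines of PG(3,q), where a point and a line are incident when the corresponding 1-subspace and 2-subspace intersect trivially, and let Bᵗ denote its transpose. Then Bᵗ·B = (q³ + q²)·I + (q³ + q² − q − 1)·A + (q³ + q² − q)·(J − A − I), where A is the skew-lines incidence matrix, I the identity, and J the all-ones matrix on L_2. -/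
open Matrix

private lemma card_ne' (α : Type*) [Fintype α] [DecidableEq α] (a : α) :
    Fintype.card {x : α // x ≠ a} = Fintype.card α - 1 := by
  have := Fintype.card_subtype_compl (fun x : α => x = a)
  simpa [Fintype.card_subtype_eq] using this

private lemma key_count {F V : Type*} [Field F] [Fintype F] [AddCommGroup V] [Module F V]
    [FiniteDimensional F V] (Y : Submodule F V) :
    (Fintype.card F - 1) * Nat.card {z : Submodule F V // Module.finrank F z = 1 ∧ z ≤ Y}
      = Fintype.card F ^ Module.finrank F Y - 1 := by
  classical
  have hfin : Finite V := Module.finite_of_finite F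
  have : Fintype V := Fintype.ofFinite V
  have e : {v : Y // v ≠ 0} ≃
      Σ z : {z : Submodule F V // Module.finrank F z = 1 ∧ z ≤ Y}, {x : z.1 // x ≠ 0} :=
    { toFun := fun v =>
        ⟨⟨Submodule.span F {(v.1 : V)},
          finrank_span_singleton (by simpa [Submodule.coe_eq_zero] using v.2),
          Submodule.span_le.2 (by simpa using v.1.2)⟩,
         ⟨(v.1 : V), Submodule.mem_span_singleton_self _⟩,
         by intro h; apply v.2; have h2 := Subtype.ext_iff.1 h; ext; exact h2⟩
      invFun := fun x =>
        ⟨⟨(x.2.1 : V), x.1.2.2 x.2.1.2⟩,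
         by intro h; apply x.2.2; have h2 := Subtype.ext_iff.1 h; ext; exact h2⟩
      left_inv := fun v => by ext; rfl
      right_inv := by
        rintro ⟨⟨z, hz1, hzY⟩, ⟨x, hx⟩, hx0⟩
        have hxne : x ≠ 0 := by simpa [Ne, Subtype.ext_iff] using hx0
        have hspan : Submodule.span F {x} = z :=
          Submodule.eq_of_le_of_finrank_le
            ((Submodule.span_singleton_le_iff_mem _ _).2 hx)
            (by rw [hz1, finrank_span_singleton hxne])
        subst hspan
        rfl }
  have h1 : Nat.card {v : Y // v ≠ 0} = Fintype.card F ^ Module.finrank F Y - 1 := by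
    rw [Nat.card_eq_fintype_card, card_ne', Module.card_eq_pow_finrank (K := F) (V := Y)]
  rw [← h1, Nat.card_congr e]
  simp only [Nat.card_eq_fintype_card]
  rw [Fintype.card_sigma]
  have h2 : ∀ z : {z : Submodule F V // Module.finrank F z = 1 ∧ z ≤ Y},
      Fintype.card {x : z.1 // x ≠ 0} = Fintype.card F - 1 := by
    intro z
    rw [card_ne', Module.card_eq_pow_finrank (K := F) (V := z.1), z.2.1, pow_one]
  simp only [h2, Finset.sum_const, Finset.card_univ, smul_eq_mul]
  ring

/-- The point-line (zero-intersection) incidence matrix `B` of `PG(3,q)` satisfies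
`Bᵗ B = (q³ + q²) I + (q³ + q² − q − 1) A + (q³ + q² − q)(J − A − I)`, where `A` is the
skew-lines incidence matrix. -/
theorem transpose_mul_eq (q : ℕ)
    (F : Type*) [Field F] [Fintype F] (hF : Fintype.card F = q)
    (V : Type*) [AddCommGroup V] [Module F V] (hV : Module.finrank F V = 4)
    [DecidableEq (Submodule F V)] [Fintype (LGr F V 1)] [Fintype (LGr F V 2)]
    (A : Matrix (LGr F V 2) (LGr F V 2) ℤ)
    (hA : ∀ U W : LGr F V 2, A U W = if U.1 ⊓ W.1 = ⊥ then 1 else 0)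
    (B : Matrix (LGr F V 1) (LGr F V 2) ℤ)
    (hB : ∀ z W, B z W = if z.1 ⊓ W.1 = ⊥ then 1 else 0)
    (J : Matrix (LGr F V 2) (LGr F V 2) ℤ) (hJ : ∀ U W, J U W = 1) :
    Bᵀ * B = ((q : ℤ) ^ 3 + (q : ℤ) ^ 2) • (1 : Matrix (LGr F V 2) (LGr F V 2) ℤ) +
        ((q : ℤ) ^ 3 + (q : ℤ) ^ 2 - (q : ℤ) - 1) • A +
        ((q : ℤ) ^ 3 + (q : ℤ) ^ 2 - (q : ℤ)) • (J - A - 1) := by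
  classical
  have hq2 : 2 ≤ q := hF ▸ Fintype.one_lt_card
  have hFD : FiniteDimensional F V := FiniteDimensional.of_finrank_pos (by rw [hV]; norm_num)
  set n : Submodule F V → ℕ := fun Y => Nat.card {z : LGr F V 1 // z.1 ≤ Y} with hn
  have hcZ : ∀ Y : Submodule F V,
      ((q : ℤ) - 1) * (n Y : ℤ) = (q : ℤ) ^ Module.finrank F Y - 1 := by
    intro Y
    have h0 : n Y = Nat.card {z : Submodule F V // Module.finrank F z = 1 ∧ z ≤ Y} :=
      Nat.card_congr (Equiv.subtypeSubtypeEquivSubtypeInter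
        (fun z : Submodule F V => Module.finrank F z = 1) (fun z => z ≤ Y))
    have h1 := key_count (F := F) (V := V) Y
    rw [hF] at h1
    rw [← h0] at h1
    have hq1 : 1 ≤ q := by omega
    have hp1 : 1 ≤ q ^ Module.finrank F ↥Y := Nat.one_le_pow _ _ (by omega)
    zify [hq1, hp1] at h1
    exact h1
  have hqne : ((q : ℤ) - 1) ≠ 0 := by
    have : (2 : ℤ) ≤ (q : ℤ) := by exact_mod_cast hq2
    omega
  have hbot : ∀ (z : LGr F V 1) (Y : Submodule F V), z.1 ⊓ Y = ⊥ ↔ ¬ z.1 ≤ Y := by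
    intro z Y
    constructor
    · intro h hle
      have h2 : z.1 ⊓ Y = z.1 := inf_eq_left.2 hle
      rw [h2] at h
      have h3 := z.2
      rw [h, finrank_bot] at h3
      exact absurd h3 (by norm_num)
    · intro h
      by_contra hne
      have hle : z.1 ⊓ Y ≤ z.1 := inf_le_left
      have hd1 : Module.finrank F ↥(z.1 ⊓ Y) ≠ 0 := by
        simpa [Submodule.finrank_eq_zero] using hne
      have heq : z.1 ⊓ Y = z.1 :=
        Submodule.eq_of_le_of_finrank_le hle (by rw [z.2]; omega)
      exact h (le_trans (le_of_eq heq.symm) inf_le_right)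
  ext U W
  have hterm : ∀ z : LGr F V 1,
      (if z.1 ⊓ U.1 = ⊥ then (1 : ℤ) else 0) * (if z.1 ⊓ W.1 = ⊥ then (1 : ℤ) else 0)
        = 1 - (if z.1 ≤ U.1 then 1 else 0) - (if z.1 ≤ W.1 then 1 else 0)
          + (if z.1 ≤ U.1 ⊓ W.1 then 1 else 0) := by
    intro z
    rw [if_congr (hbot z U.1) rfl rfl, if_congr (hbot z W.1) rfl rfl]
    by_cases h1 : z.1 ≤ U.1 <;> by_cases h2 : z.1 ≤ W.1 <;>
      simp [h1, h2, le_inf_iff]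
  have hmul : (Bᵀ * B) U W = (n ⊤ : ℤ) - n U.1 - n W.1 + n (U.1 ⊓ W.1) := by
    rw [Matrix.mul_apply]
    simp only [Matrix.transpose_apply, hB]
    rw [Finset.sum_congr rfl fun z _ => hterm z]
    rw [Finset.sum_add_distrib, Finset.sum_sub_distrib, Finset.sum_sub_distrib,
      Finset.sum_const, Finset.sum_boole, Finset.sum_boole, Finset.sum_boole]
    have hcard : ∀ Y : Submodule F V,
        (Finset.univ.filter (fun z : LGr F V 1 => z.1 ≤ Y)).card = n Y := by
      intro Y
      simp only [hn]
      rw [Nat.card_eq_fintype_card, Fintype.card_subtype]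
    rw [hcard, hcard, hcard]
    have htop : n ⊤ = Fintype.card (LGr F V 1) := by
      simp only [hn]
      rw [Nat.card_eq_fintype_card]
      exact Fintype.card_congr (Equiv.subtypeUnivEquiv fun _ => le_top)
    rw [htop]
    simp [Finset.card_univ]
  rw [hmul]
  have hT := hcZ ⊤
  rw [finrank_top, hV] at hT
  have hU := hcZ U.1
  rw [U.2] at hU
  have hW := hcZ W.1
  rw [W.2] at hW
  simp only [Matrix.add_apply, Matrix.smul_apply, Matrix.sub_apply, Matrix.one_apply,
    hA U W, hJ U W, smul_eq_mul]
  by_cases hUW : U = W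
  · subst hUW
    have hbot' : ¬ (U.1 ⊓ U.1 = ⊥) := by
      rw [inf_idem]
      intro h
      have := U.2
      rw [h, finrank_bot] at this
      exact absurd this (by norm_num)
    rw [if_pos rfl, if_neg hbot', inf_idem]
    apply mul_left_cancel₀ hqne
    linear_combination hT - hU
  · have hne1 : U.1 ≠ W.1 := fun h => hUW (Subtype.ext h)
    rw [if_neg hUW]
    by_cases hb : U.1 ⊓ W.1 = ⊥
    · rw [if_pos hb]
      rw [hb]
      have hI := hcZ (⊥ : Submodule F V)
      rw [finrank_bot] at hI
      apply mul_left_cancel₀ hqne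
      linear_combination hT - hU - hW + hI
    · rw [if_neg hb]
      have hle : U.1 ⊓ W.1 ≤ U.1 := inf_le_left
      have hd2 : Module.finrank F ↥(U.1 ⊓ W.1) ≤ 2 := by
        have h := Submodule.finrank_mono (R := F) hle
        rw [U.2] at h
        exact h
      have hd0 : Module.finrank F ↥(U.1 ⊓ W.1) ≠ 0 := by
        simpa [Submodule.finrank_eq_zero] using hb
      have hdne2 : Module.finrank F ↥(U.1 ⊓ W.1) ≠ 2 := by
        intro h
        have heq : U.1 ⊓ W.1 = U.1 :=
          Submodule.eq_of_le_of_finrank_le hle (by rw [U.2, h])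
        have hUleW : U.1 ≤ W.1 := le_trans (le_of_eq heq.symm) inf_le_right
        exact hne1 (Submodule.eq_of_le_of_finrank_eq hUleW (by rw [U.2, W.2]))
      have hd1 : Module.finrank F ↥(U.1 ⊓ W.1) = 1 := by omega
      have hI := hcZ (U.1 ⊓ W.1)
      rw [hd1] at hI
      apply mul_left_cancel₀ hqne
      linear_combination hT - hU - hW + hI
end
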